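/- Let p be a prime and e ≥ 1. Then x^{p^e+p^{e−1}−1} ∉ J; consequently, in the quotient ring A = R/J the class a of x satisfies p^e·a = 0 (since p^e·F_0(x,y) = p^e·x is a generator of J) while a^{p^e+p^{e−1}−1} ≠ 0. -/

import Mathlib

open MvPolynomial

/-- The ideal `(p) ⊆ ℤ` is prime when `p` is a prime number. -/
instance spanIntPrime (p : ℕ) [hp : Fact p.Prime] : (Ideal.span {(p : ℤ)}).IsPrime :=
  (Ideal.span_singleton_prime (by exact_mod_cast hp.out.ne_zero)).mpr
    (Nat.prime_iff_prime_int.mp hp.out)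

/-- `K = ℤ_(p)`, the localization of `ℤ` at the prime ideal `(p)`. -/
abbrev Kloc (p : ℕ) [Fact p.Prime] : Type :=
  Localization.AtPrime (Ideal.span {(p : ℤ)})

/-- `R = K[x,y]`, the polynomial ring in two variables (`x = X 0`, `y = X 1`) over `K`. -/
abbrev Rpoly (p : ℕ) [Fact p.Prime] : Type :=
  MvPolynomial (Fin 2) (Kloc p)

/-- The polynomials `F_n ∈ ℤ[s,t]` (with `s = X 0`, `t = X 1`), defined recursively by
`F_0(s,t) = s` and `F_n(s,t) = F_{n-1}(s,t)^p - p · F_{n-1}(t,0)`. -/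
noncomputable def F (p : ℕ) : ℕ → MvPolynomial (Fin 2) ℤ
  | 0 => X 0
  | n + 1 => F p n ^ p - (p : MvPolynomial (Fin 2) ℤ) * (aeval ![X 1, 0] (F p n))

/-- `F_n(x,y) ∈ R`: the image of `F_n` under the evaluation `s ↦ x`, `t ↦ y`. -/
noncomputable def Fxy (p : ℕ) [Fact p.Prime] (n : ℕ) : Rpoly p :=
  MvPolynomial.map (Int.castRingHom (Kloc p)) (F p n)

/-!
The substitution `σ = shift : x ↦ F₁ = x^p - p y, y ↦ y^p` sends `F_n` to `F_{n+1}`, hence the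
generators of `J e + (p^{e+1})` onto generators of `J (e+1) + (p^{e+2})`. It has a one-sided
inverse up to scalars: in the free `R`-algebra `S₂ = R[η, ξ]/(η^p - y, ξ^p - x - pη)` of rank `p²`
the map `x ↦ ξ, y ↦ η` turns `σ g` into `g`, so the `R`-coordinate `Λ` along the basis element
`ξ^{p-1}` satisfies `Λ(σ g · h) = g · Λ h`, and `Λ` maps `J (e+1) + (p^{e+2})` into
`J e + (p^{e+1})`.

One proves `x^{N e} ∉ J e + (p^{e+1})` by induction on `e`. Since `N (e+1) = p N e + p - 1`,
`Λ(x^{N (e+1)})` is the image of `(x + pη)^{N e}`, that is `x^{N e}` plus multiples of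
`p^d x^{N e - d}` with `d ≥ 1`; these lie in `J e + (p^{e+1})` because
`p^κ x^{N m + 1} ∈ J (κ + m)` (expand `x^p = F₁ + p y` and induct). For `e = 1` the functional
`f ↦ p·[x^p] f + [y] f` is `p` on `x^p` but divisible by `p²` on `J 1 + (p²)`.
-/

theorem pow_mul_add_mul_pow_mem {R : Type*} [CommRing R] {I : Ideal R} {q a b : R} {κ M : ℕ}
    (h : ∀ k ≤ M, q ^ (κ + (M - k)) * a ^ k * b ^ (M - k) ∈ I) :
    q ^ κ * (a + q * b) ^ M ∈ I := by
  rw [add_pow, Finset.mul_sum]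
  refine Ideal.sum_mem _ fun k hk => ?_
  have hterm : q ^ κ * (a ^ k * (q * b) ^ (M - k) * (M.choose k : R)) =
      (M.choose k : R) * (q ^ (κ + (M - k)) * a ^ k * b ^ (M - k)) := by
    rw [mul_pow, pow_add]
    ring
  rw [hterm]
  exact Ideal.mul_mem_left _ _ (h k (Nat.lt_succ_iff.mp (Finset.mem_range.mp hk)))

theorem PowerBasis.basis_coord_gen_pow {A B : Type*} [CommRing A] [Ring B] [Algebra A B]
    (pb : PowerBasis A B) {i : ℕ} (hi : i < pb.dim) : pb.basis.coord ⟨i, hi⟩ (pb.gen ^ i) = 1 := by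
  rw [show pb.gen ^ i = pb.basis ⟨i, hi⟩ from (pb.basis_eq_pow ⟨i, hi⟩).symm,
    Module.Basis.coord_apply, Module.Basis.repr_self, Finsupp.single_eq_same]

theorem map_mul_mem_of_mem_span {R M : Type*} [CommRing R] [AddCommGroup M] (f : R →+ M)
    (I : AddSubgroup M) {s : Set R} (hs : ∀ g ∈ s, ∀ c, f (c * g) ∈ I) {z : R}
    (hz : z ∈ Ideal.span s) (c : R) : f (c * z) ∈ I := by
  induction hz using Submodule.span_induction generalizing c with
  | mem g hg => exact hs g hg c
  | zero => simp
  | add x y _ _ hx hy => simpa [mul_add] using I.add_mem (hx c) (hy c)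
  | smul a x _ hx => simpa [mul_assoc] using hx (c * a)

theorem mem_of_mem_map_of_map_mul {R S : Type*} [CommRing R] [CommRing S] (σ : R →+* S)
    (Λ : S →+ R) (hΛ : ∀ g h, Λ (σ g * h) = g * Λ h) {I : Ideal R} {z : S}
    (hz : z ∈ I.map σ) : Λ z ∈ I := by
  simpa using map_mul_mem_of_mem_span Λ I.toAddSubgroup
    (by rintro _ ⟨g, hg, rfl⟩ c; rw [mul_comm, hΛ]; exact I.mul_mem_right _ hg) hz 1

theorem AdjoinRoot.root_X_pow_sub_C_pow {A : Type*} [CommRing A] (n : ℕ) (a : A) :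
    root (Polynomial.X ^ n - Polynomial.C a) ^ n = of _ a := by
  rw [← sub_eq_zero, ← eval₂_root, Polynomial.eval₂_sub, Polynomial.eval₂_C,
    Polynomial.eval₂_pow, Polynomial.eval₂_X]

namespace IdealJ

section Recursion

variable (p : ℕ)

theorem aeval_F_pair_zero {S : Type*} [CommRing S] [Algebra ℤ S] (n : ℕ) (a : S) :
    aeval ![a, 0] (F p n) = a ^ p ^ n := by
  induction n generalizing a with
  | zero => simp [F]
  | succ n ih =>
    have hcomp : aeval ![a, 0] (aeval ![(X 1 : MvPolynomial (Fin 2) ℤ), 0] (F p n)) =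
        aeval ![(0 : S), 0] (F p n) := by
      rw [← AlgHom.comp_apply, comp_aeval]
      congr 2
      ext i
      fin_cases i <;> simp
    rcases eq_or_ne p 0 with rfl | hp
    · simp [F]
    · rw [F, map_sub, map_mul, map_pow, map_natCast, hcomp, ih, ih, ← pow_mul, ← pow_succ,
        zero_pow (pow_ne_zero n hp), mul_zero, sub_zero]

theorem F_succ (n : ℕ) :
    F p (n + 1) = F p n ^ p - (p : MvPolynomial (Fin 2) ℤ) * X 1 ^ p ^ n := by
  rw [F, aeval_F_pair_zero]

end Recursion

section Exponent

variable (p : ℕ)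

-- `N 0 = 0`, not the value `1` of `p^0 + p^(0-1) - 1` in `ℕ`, so that `p^e x^{N 0 + 1} = p^e x`.
def N : ℕ → ℕ
  | 0 => 0
  | m + 1 => p ^ (m + 1) + p ^ m - 1

theorem N_one : N p 1 = p := by simp [N]

variable {p}

theorem N_succ_add_one (hp : 0 < p) {m : ℕ} (hm : 1 ≤ m) :
    N p (m + 1) + 1 = p * (N p m + 1) := by
  obtain ⟨m, rfl⟩ : ∃ k, m = k + 1 := ⟨m - 1, by omega⟩
  have h1 : 1 ≤ p ^ (m + 1) := Nat.one_le_pow _ _ hp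
  have h2 : 1 ≤ p ^ (m + 1 + 1) := Nat.one_le_pow _ _ hp
  simp only [N]
  rw [Nat.sub_add_cancel (by omega), Nat.sub_add_cancel (by omega)]
  ring

theorem N_add_two_le (hp : 2 ≤ p) (m : ℕ) : N p m + 2 ≤ N p (m + 1) := by
  rcases m with _ | m
  · simp only [N, zero_add, pow_one, pow_zero, add_tsub_cancel_right]
    omega
  · have h2 : p ^ m * 4 ≤ p ^ (m + 1 + 1) := by
      rw [pow_succ, pow_succ, mul_assoc]
      exact Nat.mul_le_mul_left _ (by nlinarith)
    have h1 : p ^ m * 2 ≤ p ^ (m + 1) := by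
      rw [pow_succ]
      exact Nat.mul_le_mul_left _ hp
    have h0 : 1 ≤ p ^ m := Nat.one_le_pow _ _ (by omega)
    simp only [N]
    omega

theorem N_add_two_mul_le (hp : 2 ≤ p) (a b : ℕ) : N p a + 2 * b ≤ N p (a + b) := by
  induction b with
  | zero => simp
  | succ b ih =>
    have := N_add_two_le hp (a + b)
    rw [← add_assoc]
    omega

end Exponent

variable (p : ℕ) [Fact p.Prime]

theorem Fxy_zero : Fxy p 0 = X 0 := by simp [Fxy, F]

theorem Fxy_succ (n : ℕ) : Fxy p (n + 1) = Fxy p n ^ p - (p : Rpoly p) * X 1 ^ p ^ n := by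
  simp [Fxy, F_succ]

theorem Fxy_one : Fxy p 1 = X 0 ^ p - (p : Rpoly p) * X 1 := by
  simp [Fxy_succ, Fxy_zero]

noncomputable def shift : Rpoly p →ₐ[Kloc p] Rpoly p := aeval ![Fxy p 1, X 1 ^ p]

theorem shift_X0 : shift p (X 0) = Fxy p 1 := by simp [shift]

theorem shift_X1 : shift p (X 1) = X 1 ^ p := by simp [shift]

theorem shift_Fxy (n : ℕ) : shift p (Fxy p n) = Fxy p (n + 1) := by
  induction n with
  | zero => rw [Fxy_zero, shift_X0]
  | succ n ih =>
    rw [Fxy_succ, map_sub, map_mul, map_pow, ih, map_natCast, map_pow, shift_X1, ← pow_mul,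
      ← pow_succ', ← Fxy_succ]

theorem shift_X1_pow_pow (e : ℕ) : shift p (X 1 ^ p ^ e) = X 1 ^ p ^ (e + 1) := by
  rw [map_pow, shift_X1, ← pow_mul, ← pow_succ']

noncomputable def J (e : ℕ) : Ideal (Rpoly p) :=
  Ideal.span ((Set.range fun n : Fin (e + 1) => (p : Rpoly p) ^ (e - (n : ℕ)) * Fxy p n) ∪
    {X 1 ^ p ^ e})

theorem pow_mul_Fxy_mem_J {e n : ℕ} (hn : n ≤ e) : (p : Rpoly p) ^ (e - n) * Fxy p n ∈ J p e :=
  Ideal.subset_span (Or.inl ⟨⟨n, by omega⟩, rfl⟩)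

theorem X1_pow_mem_J (e : ℕ) : X 1 ^ p ^ e ∈ J p e :=
  Ideal.subset_span (Or.inr rfl)

theorem pow_mul_X0_mem_J (e : ℕ) : (p : Rpoly p) ^ e * X 0 ∈ J p e := by
  simpa [Fxy_zero] using pow_mul_Fxy_mem_J p (Nat.zero_le e)

theorem map_shift_J_le (e : ℕ) : (J p e).map (shift p) ≤ J p (e + 1) := by
  rw [J, Ideal.map_span, Ideal.span_le]
  rintro _ ⟨g, ⟨n, rfl⟩ | rfl, rfl⟩
  · rw [map_mul, map_pow, map_natCast, shift_Fxy,
      show e - (n : ℕ) = e + 1 - ((n : ℕ) + 1) by omega]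
    exact pow_mul_Fxy_mem_J p (by omega)
  · rw [shift_X1_pow_pow]
    exact X1_pow_mem_J p (e + 1)

theorem J_succ_sup_le_map_shift (e : ℕ) :
    J p (e + 1) ⊔ Ideal.span {(p : Rpoly p) ^ (e + 2)} ≤
      (J p e ⊔ Ideal.span {(p : Rpoly p) ^ (e + 1)}).map (shift p) := by
  set I := J p e ⊔ Ideal.span {(p : Rpoly p) ^ (e + 1)}
  have hp : (p : Rpoly p) ^ (e + 1) ∈ I.map (shift p) := by
    have h := Ideal.mem_map_of_mem (shift p)
      (Ideal.mem_sup_right (Ideal.mem_span_singleton_self _) : (p : Rpoly p) ^ (e + 1) ∈ I)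
    rwa [map_pow, map_natCast] at h
  refine sup_le ?_ ?_
  · rw [J, Ideal.span_le]
    rintro _ (⟨⟨n, hn⟩, rfl⟩ | rfl)
    · dsimp only
      rcases n with _ | n
      · rw [Fxy_zero, Nat.sub_zero]
        exact Ideal.mul_mem_right _ _ hp
      · have h := Ideal.mem_map_of_mem (shift p)
          (Ideal.mem_sup_left (pow_mul_Fxy_mem_J p (by omega : n ≤ e)) : _ ∈ I)
        rwa [map_mul, map_pow, map_natCast, shift_Fxy,
          show e - n = e + 1 - (n + 1) by omega] at h
    · rw [← shift_X1_pow_pow]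
      exact Ideal.mem_map_of_mem _ (Ideal.mem_sup_left (X1_pow_mem_J p e))
  · rw [Ideal.span_le, Set.singleton_subset_iff, pow_succ]
    exact Ideal.mul_mem_right _ _ hp

theorem pow_succ_mul_X1_mem_J {e : ℕ} (he : 1 ≤ e) :
    (p : Rpoly p) ^ (e + 1) * X 1 ∈ J p e := by
  obtain ⟨d, rfl⟩ : ∃ d, e = d + 1 := ⟨e - 1, by omega⟩
  have key : (p : Rpoly p) ^ (d + 1 + 1) * X 1 =
      X 0 ^ (p - 1) * ((p : Rpoly p) ^ (d + 1) * X 0) -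
        (p : Rpoly p) * ((p : Rpoly p) ^ (d + 1 - 1) * Fxy p 1) := by
    rw [Fxy_one, Nat.add_sub_cancel, ← pow_sub_one_mul (Fact.out : p.Prime).ne_zero (X 0)]
    ring
  rw [key]
  exact sub_mem (Ideal.mul_mem_left _ _ (pow_mul_X0_mem_J p _))
    (Ideal.mul_mem_left _ _ (pow_mul_Fxy_mem_J p he))

theorem pow_mul_X0_pow_succ_mem_J (κ : ℕ) : (p : Rpoly p) ^ κ * X 0 ^ (p + 1) ∈ J p (κ + 1) := by
  have key : (p : Rpoly p) ^ κ * X 0 ^ (p + 1) =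
      X 0 * ((p : Rpoly p) ^ (κ + 1 - 1) * Fxy p 1) + X 1 * ((p : Rpoly p) ^ (κ + 1) * X 0) := by
    rw [Fxy_one, Nat.add_sub_cancel]
    ring
  rw [key]
  exact add_mem (Ideal.mul_mem_left _ _ (pow_mul_Fxy_mem_J p (by omega)))
    (Ideal.mul_mem_left _ _ (pow_mul_X0_mem_J p _))

/-- The terms of `p^κ x^{N (m+2) + 1} = p^κ (F₁ + p y)^{N (m+1) + 1}`, given the membership one
level down. -/
theorem pow_mul_Fxy_one_pow_mul_X1_pow_mem_J {E κ m k : ℕ}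
    (ih : ∀ {κ' r : ℕ}, κ' + r = E → (p : Rpoly p) ^ κ' * X 0 ^ (N p r + 1) ∈ J p E)
    (hE : κ + (m + 2) = E + 1) (hk : k ≤ N p (m + 1) + 1) :
    (p : Rpoly p) ^ (κ + (N p (m + 1) + 1 - k)) * Fxy p 1 ^ k * X 1 ^ (N p (m + 1) + 1 - k) ∈
      J p (E + 1) := by
  have hgrow := N_add_two_mul_le (Fact.out : p.Prime).two_le
  set M := N p (m + 1) + 1
  rcases Nat.eq_zero_or_pos k with rfl | hk0
  · -- `M ≥ m + 3`, so this is a multiple of `p^{E+2} y`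
    have hMm : m + 3 ≤ M := by
      have := hgrow 0 (m + 1)
      rw [zero_add, show N p 0 = 0 from rfl] at this
      omega
    refine Ideal.mem_of_dvd _ ?_ (pow_succ_mul_X1_mem_J p (e := E + 1) (by omega))
    rw [pow_zero, mul_one, Nat.sub_zero]
    exact mul_dvd_mul (pow_dvd_pow _ (by omega)) (dvd_pow_self _ (by omega))
  by_cases hi : M - k ≤ m + 1
  · -- the image under `shift` of a membership in `J E`
    obtain ⟨r, hr⟩ : ∃ r, m + 1 = r + (M - k) := ⟨m + 1 - (M - k), by omega⟩
    have hshift := map_shift_J_le p E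
      (Ideal.mem_map_of_mem _ (ih (κ' := κ + (M - k)) (r := r) (by omega)))
    rw [map_mul, map_pow, map_natCast, map_pow, shift_X0] at hshift
    refine Ideal.mem_of_dvd _ ((mul_dvd_mul_left _ (pow_dvd_pow _ ?_)).mul_right _) hshift
    have := hgrow r (M - k)
    rw [← hr] at this
    omega
  · refine Ideal.mem_of_dvd _ ?_ (pow_mul_Fxy_mem_J p (e := E + 1) (n := 1) (by omega))
    exact (mul_dvd_mul (pow_dvd_pow _ (by omega)) (dvd_pow_self _ hk0.ne')).mul_right _

theorem pow_mul_X0_pow_N_succ_mem_J {E κ m : ℕ} (hE : κ + m = E) :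
    (p : Rpoly p) ^ κ * X 0 ^ (N p m + 1) ∈ J p E := by
  induction E generalizing κ m with
  | zero =>
    obtain ⟨rfl, rfl⟩ : κ = 0 ∧ m = 0 := by omega
    simpa [N] using pow_mul_X0_mem_J p 0
  | succ E ih =>
    rcases m with _ | _ | m
    · simpa [N, show κ = E + 1 by omega] using pow_mul_X0_mem_J p (E + 1)
    · obtain rfl : κ = E := by omega
      simpa [N_one] using pow_mul_X0_pow_succ_mem_J p κ
    · rw [N_succ_add_one (Fact.out : p.Prime).pos (by omega), pow_mul,
        ← sub_add_cancel (X 0 ^ p) ((p : Rpoly p) * X 1), ← Fxy_one]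
      exact pow_mul_add_mul_pow_mem fun k hk => pow_mul_Fxy_one_pow_mul_X1_pow_mem_J p ih hE hk

noncomputable def polyY : Polynomial (Rpoly p) := Polynomial.X ^ p - Polynomial.C (X 1)

abbrev S1 : Type := AdjoinRoot (polyY p)

noncomputable abbrev η : S1 p := AdjoinRoot.root _

instance : Nontrivial (S1 p) :=
  AdjoinRoot.nontrivial _ <| by
    rw [polyY, Polynomial.degree_X_pow_sub_C (NeZero.pos p)]
    exact_mod_cast NeZero.ne p

noncomputable def polyZ : Polynomial (S1 p) :=
  Polynomial.X ^ p - Polynomial.C (algebraMap (Rpoly p) (S1 p) (X 0) + p * η p)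

abbrev S2 : Type := AdjoinRoot (polyZ p)

noncomputable abbrev ξ : S2 p := AdjoinRoot.root _

theorem η_pow : η p ^ p = algebraMap (Rpoly p) (S1 p) (X 1) :=
  AdjoinRoot.root_X_pow_sub_C_pow _ _

theorem ξ_pow :
    ξ p ^ p = algebraMap (S1 p) (S2 p) (algebraMap (Rpoly p) (S1 p) (X 0) + p * η p) :=
  AdjoinRoot.root_X_pow_sub_C_pow _ _

theorem polyY_monic : (polyY p).Monic := Polynomial.monic_X_pow_sub_C _ (NeZero.ne p)

theorem polyZ_monic : (polyZ p).Monic := Polynomial.monic_X_pow_sub_C _ (NeZero.ne p)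

noncomputable def basisS1 : PowerBasis (Rpoly p) (S1 p) :=
  AdjoinRoot.powerBasis' (polyY_monic p)

noncomputable def basisS2 : PowerBasis (S1 p) (S2 p) := AdjoinRoot.powerBasis' (polyZ_monic p)

theorem basisS1_dim : (basisS1 p).dim = p := by
  rw [basisS1, AdjoinRoot.powerBasis'_dim, polyY, Polynomial.natDegree_X_pow_sub_C]

theorem basisS2_dim : (basisS2 p).dim = p := by
  rw [basisS2, AdjoinRoot.powerBasis'_dim, polyZ, Polynomial.natDegree_X_pow_sub_C]

noncomputable def tower : Rpoly p →ₐ[Kloc p] S2 p :=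
  aeval ![ξ p, algebraMap (S1 p) (S2 p) (η p)]

theorem tower_X0 : tower p (X 0) = ξ p := by simp [tower]

theorem tower_X1 : tower p (X 1) = algebraMap (S1 p) (S2 p) (η p) := by simp [tower]

theorem tower_shift (g : Rpoly p) : tower p (shift p g) = algebraMap (Rpoly p) (S2 p) g := by
  have hcomp : (tower p).comp (shift p) = IsScalarTower.toAlgHom (Kloc p) (Rpoly p) (S2 p) := by
    apply MvPolynomial.algHom_ext
    intro i
    fin_cases i
    · show tower p (shift p (X 0)) = algebraMap (Rpoly p) (S2 p) (X 0)
      rw [shift_X0, Fxy_one, map_sub, map_mul, map_pow, map_natCast, tower_X0, tower_X1, ξ_pow,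
        map_add, map_mul, map_natCast, add_sub_cancel_right, ← IsScalarTower.algebraMap_apply]
    · show tower p (shift p (X 1)) = algebraMap (Rpoly p) (S2 p) (X 1)
      rw [shift_X1, map_pow, tower_X1, ← map_pow, η_pow, ← IsScalarTower.algebraMap_apply]
  exact DFunLike.congr_fun hcomp g

theorem basisS2_gen : (basisS2 p).gen = ξ p := rfl

noncomputable def coordS1 : S1 p →ₗ[Rpoly p] Rpoly p :=
  (basisS1 p).basis.coord ⟨0, by rw [basisS1_dim]; exact NeZero.pos p⟩

theorem coordS1_one : coordS1 p 1 = 1 := by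
  rw [coordS1, ← pow_zero (basisS1 p).gen, PowerBasis.basis_coord_gen_pow]

noncomputable def coordS2 : S2 p →ₗ[Rpoly p] Rpoly p :=
  coordS1 p ∘ₗ
    ((basisS2 p).basis.coord ⟨p - 1, by rw [basisS2_dim]; exact Nat.sub_one_lt (NeZero.ne p)⟩
      ).restrictScalars (Rpoly p)

noncomputable def Λ : Rpoly p →+ Rpoly p :=
  (coordS2 p).toAddMonoidHom.comp (tower p).toRingHom.toAddMonoidHom

theorem Λ_apply (z : Rpoly p) : Λ p z = coordS2 p (tower p z) := rfl

theorem Λ_shift_mul (g h : Rpoly p) : Λ p (shift p g * h) = g * Λ p h := by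
  rw [Λ_apply, map_mul, tower_shift, ← Algebra.smul_def, map_smul, smul_eq_mul, Λ_apply]

theorem coordS2_algebraMap_mul_ξ_pow (c : S1 p) :
    coordS2 p (algebraMap (S1 p) (S2 p) c * ξ p ^ (p - 1)) = coordS1 p c := by
  rw [coordS2, LinearMap.comp_apply, LinearMap.restrictScalars_apply, ← Algebra.smul_def,
    map_smul, ← basisS2_gen, PowerBasis.basis_coord_gen_pow, smul_eq_mul, mul_one]

theorem Λ_X0_pow (n : ℕ) : ∃ c : ℕ → Rpoly p,
    Λ p (X 0 ^ (p * n + (p - 1))) =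
      X 0 ^ n + ∑ d ∈ Finset.range n, (p : Rpoly p) ^ (d + 1) * X 0 ^ (n - (d + 1)) * c d := by
  refine ⟨fun d => (n.choose (d + 1) : Rpoly p) * coordS1 p (η p ^ (d + 1)), ?_⟩
  have htower : tower p (X 0 ^ (p * n + (p - 1))) =
      algebraMap (S1 p) (S2 p) ((p * η p + algebraMap (Rpoly p) (S1 p) (X 0)) ^ n) *
        ξ p ^ (p - 1) := by
    rw [map_pow, tower_X0, pow_add, pow_mul, ξ_pow, ← map_pow, add_comm]
  have hterm (d : ℕ) :
      coordS1 p ((p * η p) ^ d * algebraMap (Rpoly p) (S1 p) (X 0) ^ (n - d) * n.choose d) =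
        (p : Rpoly p) ^ d * X 0 ^ (n - d) * ((n.choose d : Rpoly p) * coordS1 p (η p ^ d)) := by
    have hsmul : (p * η p) ^ d * algebraMap (Rpoly p) (S1 p) (X 0) ^ (n - d) * n.choose d =
        ((p : Rpoly p) ^ d * X 0 ^ (n - d) * (n.choose d : Rpoly p)) • η p ^ d := by
      rw [Algebra.smul_def]
      simp only [map_mul, map_pow, map_natCast]
      ring
    rw [hsmul, map_smul, smul_eq_mul]
    ring
  rw [Λ_apply, htower, coordS2_algebraMap_mul_ξ_pow, add_pow, map_sum, Finset.sum_range_succ',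
    add_comm]
  simp only [hterm]
  simp [coordS1_one, mul_assoc]

noncomputable def μ : Rpoly p →+ Kloc p :=
  ((p : Kloc p) • lcoeff (Kloc p) (Finsupp.single (0 : Fin 2) p) +
    lcoeff (Kloc p) (Finsupp.single (1 : Fin 2) 1)).toAddMonoidHom

theorem μ_apply (f : Rpoly p) :
    μ p f = p * coeff (Finsupp.single 0 p) f + coeff (Finsupp.single 1 1) f := rfl

theorem coeff_mul_X_pow_of_not_le {m : Fin 2 →₀ ℕ} {i : Fin 2} {k : ℕ} (h : ¬k ≤ m i)
    (c : Rpoly p) : coeff m (c * X i ^ k) = 0 := by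
  rw [X_pow_eq_monomial, coeff_mul_monomial', if_neg (by rwa [Finsupp.single_le_iff])]

theorem coeff_single_mul_X_pow (i : Fin 2) (k : ℕ) (c : Rpoly p) :
    coeff (Finsupp.single i k) (c * X i ^ k) = coeff 0 c := by
  rw [X_pow_eq_monomial, coeff_mul_monomial', if_pos le_rfl, tsub_self, mul_one]

theorem μ_natCast_mul (n : ℕ) (f : Rpoly p) : μ p (n * f) = n * μ p f := by
  rw [← map_natCast C n, μ_apply, coeff_C_mul, coeff_C_mul, μ_apply]
  ring

theorem μ_mul_X0_pow (c : Rpoly p) : μ p (c * X 0 ^ p) = p * coeff 0 c := by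
  rw [μ_apply, coeff_single_mul_X_pow, coeff_mul_X_pow_of_not_le p (by simp [NeZero.ne p]),
    add_zero]

theorem μ_mul_X1 (c : Rpoly p) : μ p (c * X 1) = coeff 0 c := by
  rw [← pow_one (X 1), μ_apply, coeff_single_mul_X_pow, coeff_mul_X_pow_of_not_le p (by simp),
    mul_zero, zero_add]

theorem μ_mul_mem_span (g : Rpoly p)
    (hg : g ∈ (Set.range fun n : Fin 2 => (p : Rpoly p) ^ (1 - (n : ℕ)) * Fxy p n) ∪
      {X 1 ^ p ^ 1} ∪ {(p : Rpoly p) ^ 2}) (c : Rpoly p) :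
    μ p (c * g) ∈ Ideal.span {(p : Kloc p) ^ 2} := by
  have hp := (Fact.out : p.Prime).two_le
  rw [Ideal.mem_span_singleton]
  rcases hg with (⟨n, rfl⟩ | rfl) | rfl
  · rcases n with ⟨_ | _ | n, hn⟩
    · dsimp only
      rw [Fxy_zero, pow_one, mul_left_comm, μ_natCast_mul, ← pow_one (X 0), μ_apply,
        coeff_mul_X_pow_of_not_le p (m := Finsupp.single 1 1) (by simp)]
      exact ⟨coeff _ (c * X 0 ^ 1), by ring⟩
    · dsimp only
      rw [Nat.sub_self, pow_zero, one_mul, Fxy_one, mul_sub, map_sub, mul_left_comm,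
        μ_natCast_mul, μ_mul_X0_pow, μ_mul_X1, sub_self]
      exact dvd_zero _
    · omega
  · rw [pow_one, μ_apply, coeff_mul_X_pow_of_not_le p
        (by rw [Finsupp.single_eq_of_ne (by decide)]; omega),
      coeff_mul_X_pow_of_not_le p (by rw [Finsupp.single_eq_same]; omega), mul_zero, add_zero]
    exact dvd_zero _
  · have h := μ_natCast_mul p (p ^ 2) c
    push_cast at h
    rw [mul_comm, h]
    exact dvd_mul_right _ _

theorem natCast_ne_zero : (p : Kloc p) ≠ 0 := by
  rw [← map_natCast (algebraMap ℤ (Kloc p))]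
  exact IsLocalization.to_map_ne_zero_of_mem_nonZeroDivisors _
    (Ideal.primeCompl_le_nonZeroDivisors (Ideal.span {(p : ℤ)})) (by simp [NeZero.ne p])

theorem not_isUnit_natCast : ¬IsUnit (p : Kloc p) := by
  rw [← map_natCast (algebraMap ℤ (Kloc p)),
    IsLocalization.AtPrime.isUnit_to_map_iff (Kloc p) (Ideal.span {(p : ℤ)})]
  exact fun h => h (Ideal.mem_span_singleton_self _)

theorem X0_pow_not_mem_J_one_sup : X 0 ^ p ∉ J p 1 ⊔ Ideal.span {(p : Rpoly p) ^ 2} := by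
  intro h
  rw [J, ← Ideal.span_union] at h
  have hμ := map_mul_mem_of_mem_span (μ p) (Ideal.span {(p : Kloc p) ^ 2}).toAddSubgroup
    (μ_mul_mem_span p) h 1
  rw [one_mul, ← one_mul (X 0 ^ p), μ_mul_X0_pow, coeff_zero_one, mul_one] at hμ
  have hdvd : (p : Kloc p) ^ 2 ∣ (p : Kloc p) ^ 1 := by
    rwa [pow_one, ← Ideal.mem_span_singleton]
  exact absurd ((pow_dvd_pow_iff (natCast_ne_zero p) (not_isUnit_natCast p)).mp hdvd) (by omega)

theorem Λ_mem_of_mem_J_succ_sup {e : ℕ} {z : Rpoly p}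
    (hz : z ∈ J p (e + 1) ⊔ Ideal.span {(p : Rpoly p) ^ (e + 2)}) :
    Λ p z ∈ J p e ⊔ Ideal.span {(p : Rpoly p) ^ (e + 1)} :=
  mem_of_mem_map_of_map_mul (shift p).toRingHom (Λ p) (Λ_shift_mul p)
    (J_succ_sup_le_map_shift p e hz)

theorem X0_pow_N_not_mem_J_sup {e : ℕ} (he : 1 ≤ e) :
    X 0 ^ N p e ∉ J p e ⊔ Ideal.span {(p : Rpoly p) ^ (e + 1)} := by
  have hp := (Fact.out : p.Prime)
  induction e, he using Nat.le_induction with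
  | base => simpa [N_one] using X0_pow_not_mem_J_one_sup p
  | succ e he ih =>
    intro h
    obtain ⟨c, hc⟩ := Λ_X0_pow p (N p e)
    have hN : N p (e + 1) = p * N p e + (p - 1) := by
      have := N_succ_add_one hp.pos he
      rw [mul_add, mul_one] at this
      have := hp.pos
      omega
    have hΛ := Λ_mem_of_mem_J_succ_sup p h
    rw [hN, hc] at hΛ
    refine ih ((Submodule.add_mem_iff_left _ (Ideal.sum_mem _ fun d _ => ?_)).mp hΛ)
    by_cases hd : e ≤ d
    · refine Ideal.mem_sup_right (Ideal.mem_span_singleton.mpr ?_)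
      exact ((pow_dvd_pow _ (by omega)).mul_right _).mul_right _
    · -- `p^{d+1} x^{N r + 1} ∈ J e` for `e = d + 1 + r`, and `N e ≥ N r + 2(d+1)`
      obtain ⟨r, hr⟩ : ∃ r, d + 1 + r = e := ⟨e - (d + 1), by omega⟩
      refine Ideal.mem_sup_left (Ideal.mul_mem_right _ _ ?_)
      refine Ideal.mem_of_dvd _ (mul_dvd_mul_left _ (pow_dvd_pow _ ?_))
        (pow_mul_X0_pow_N_succ_mem_J p hr)
      have := N_add_two_mul_le hp.two_le r (d + 1)
      rw [add_comm r, hr] at this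
      omega

end IdealJ

/-- With `J ⊆ R` the ideal generated by the `p^{e-n}·F_n(x,y)` for `0 ≤ n ≤ e`
together with `y^{p^e}`, one has `x^{p^e+p^{e-1}-1} ∉ J`; consequently in `A = R/J`
the class `a` of `x` satisfies `p^e·a = 0` but `a^{p^e+p^{e-1}-1} ≠ 0`. -/
theorem x_pow_not_mem_J (p : ℕ) [hp : Fact p.Prime] (e : ℕ) (he : 1 ≤ e)
    (J : Ideal (Rpoly p))
    (hJ : J = Ideal.span
      ((Set.range fun n : Fin (e + 1) => (p : Rpoly p) ^ (e - (n : ℕ)) * Fxy p n) ∪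
        {X 1 ^ p ^ e})) :
    (X 0 : Rpoly p) ^ (p ^ e + p ^ (e - 1) - 1) ∉ J ∧
    (p : Rpoly p ⧸ J) ^ e * Ideal.Quotient.mk J (X 0) = 0 ∧
    (Ideal.Quotient.mk J (X 0 : Rpoly p)) ^ (p ^ e + p ^ (e - 1) - 1) ≠ 0 := by
  obtain rfl : J = IdealJ.J p e := hJ
  have hN : p ^ e + p ^ (e - 1) - 1 = IdealJ.N p e := by
    obtain ⟨m, rfl⟩ : ∃ m, e = m + 1 := ⟨e - 1, by omega⟩
    rfl
  have hnot : X 0 ^ IdealJ.N p e ∉ IdealJ.J p e := fun h =>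
    IdealJ.X0_pow_N_not_mem_J_sup p he (Ideal.mem_sup_left h)
  rw [hN, ← map_natCast (Ideal.Quotient.mk _), ← map_pow, ← map_pow, ← map_mul, Ne,
    Ideal.Quotient.eq_zero_iff_mem, Ideal.Quotient.eq_zero_iff_mem]
  exact ⟨hnot, IdealJ.pow_mul_X0_mem_J p e, hnot⟩
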